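/- Let $\theta \ge 0$ be real and let $1 \le k \le n$ be integers, with the convention $q^{\theta}_{n,n+1}(t) = 0$. Then for every $t > 0$, $\frac{d}{dt}\, q^{\theta}_{n,k}(t) = -\frac{k(k+\theta-1)}{2}\, q^{\theta}_{n,k}(t) + \frac{(k+1)(k+\theta)}{2}\, q^{\theta}_{n,k+1}(t)$. (This is the Kolmogorov forward equation of the pure death process $A_n^{\theta}$ in which transitions $j \to j-1$ occur at rate $j(j+\theta-1)/2$.) -/

import Mathlib

open Finset

/-- Rising factorial `x^{(m)} = x (x+1) ⋯ (x+m-1)` of a real number. -/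
noncomputable def risingFac (x : ℝ) (m : ℕ) : ℝ := ∏ i ∈ Finset.range m, (x + i)

/-- Falling factorial `n^{[j]} = n (n-1) ⋯ (n-j+1)` of a natural number, as a real. -/
noncomputable def fallingFac (n : ℕ) (j : ℕ) : ℝ := ∏ i ∈ Finset.range j, ((n : ℝ) - i)

/-- `q θ n k t = P(A_n^θ(t) = k)`.  Note that for `k = n + 1` the sum is empty, so
`q θ n (n+1) t = 0`, matching the convention `q^θ_{n,n+1}(t) = 0`. -/
noncomputable def q (θ : ℝ) (n k : ℕ) (t : ℝ) : ℝ :=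
  ∑ j ∈ Finset.Icc k n,
    Real.exp (-(j * (j + θ - 1) * t) / 2) * (-1 : ℝ) ^ (j - k) *
      ((2 * j + θ - 1) * risingFac (k + θ) (j - 1)) /
        ((Nat.factorial k : ℝ) * (Nat.factorial (j - k) : ℝ)) *
      (fallingFac n j / risingFac (n + θ) j)

/-!
Each summand of `q θ n k` is `exp (-λⱼ t) c(k, j)` with `λⱼ = j (j + θ - 1) / 2`, so
differentiating multiplies the `j`-th summand by `-λⱼ`. The summand `j = k` matches the first
term of the right-hand side, and for `j > k` the equation reduces to the coefficient identity
`(λₖ - λⱼ) c(k, j) = (k + 1) (k + θ) / 2 · c(k + 1, j)`. Since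
`λⱼ - λₖ = (j - k) (j + k + θ - 1) / 2`, this is the rising factorial recursion
`(k + θ) (k + θ + 1)^{(j-1)} = (k + θ)^{(j-1)} (k + θ + j - 1)`.
-/

open Nat Real

lemma risingFac_succ_eq_mul (x : ℝ) (m : ℕ) :
    risingFac x (m + 1) = x * risingFac (x + 1) m := by
  simp only [risingFac, prod_range_succ', Nat.cast_add, Nat.cast_one, Nat.cast_zero, add_zero]
  ring_nf

lemma mul_risingFac_add_one (x : ℝ) (m : ℕ) :
    x * risingFac (x + 1) m = risingFac x m * (x + m) := by
  rw [← risingFac_succ_eq_mul, risingFac, prod_range_succ, risingFac]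

noncomputable def deathRate (θ : ℝ) (j : ℕ) : ℝ := j * (j + θ - 1) / 2

noncomputable def qCoeff (θ : ℝ) (n k j : ℕ) : ℝ :=
  (-1 : ℝ) ^ (j - k) * ((2 * j + θ - 1) * risingFac (k + θ) (j - 1)) /
    ((k ! : ℝ) * ((j - k)! : ℝ)) * (fallingFac n j / risingFac (n + θ) j)

lemma q_eq_sum (θ : ℝ) (n k : ℕ) (t : ℝ) :
    q θ n k t = ∑ j ∈ Icc k n, exp (-(deathRate θ j * t)) * qCoeff θ n k j := by
  refine sum_congr rfl fun j _ => ?_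
  simp only [deathRate, qCoeff]
  ring_nf

lemma hasDerivAt_sum_exp {ι : Type*} (s : Finset ι) (r c : ι → ℝ) (t : ℝ) :
    HasDerivAt (fun t => ∑ j ∈ s, exp (-(r j * t)) * c j)
      (∑ j ∈ s, -r j * (exp (-(r j * t)) * c j)) t := by
  refine HasDerivAt.fun_sum fun j _ => ?_
  have hlin : HasDerivAt (fun t => -(r j * t)) (-r j) t := by
    simpa using (hasDerivAt_id' t).const_mul (-r j)
  exact (hlin.exp.mul_const (c j)).congr_deriv (by ring)

lemma deathRate_mul_qCoeff {θ : ℝ} {n k j : ℕ} (hkj : k < j) :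
    -deathRate θ j * qCoeff θ n k j
      = -deathRate θ k * qCoeff θ n k j + (k + 1) * (k + θ) / 2 * qCoeff θ n (k + 1) j := by
  obtain ⟨m, rfl⟩ := Nat.exists_eq_add_of_lt hkj
  have hrising := mul_risingFac_add_one (k + θ) (k + m)
  simp only [deathRate, qCoeff, show k + m + 1 - k = m + 1 by omega,
    show k + m + 1 - (k + 1) = m by omega, show k + m + 1 - 1 = k + m by omega,
    Nat.factorial_succ, pow_succ]
  push_cast at hrising ⊢
  rw [show (k : ℝ) + 1 + θ = k + θ + 1 by ring]
  field_simp
  linear_combination (-(m + 1) * (2 * (k + m + 1) + θ - 1) * fallingFac n (k + m + 1)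
    / risingFac (n + θ) (k + m + 1)) * hrising

theorem stmt_12_general (θ : ℝ) (n k : ℕ) (t : ℝ) :
    HasDerivAt (fun s => q θ n k s)
      (-((k : ℝ) * ((k : ℝ) + θ - 1) / 2) * q θ n k t
        + ((k : ℝ) + 1) * ((k : ℝ) + θ) / 2 * q θ n (k + 1) t) t := by
  simp only [q_eq_sum]
  convert hasDerivAt_sum_exp (Icc k n) (deathRate θ) (qCoeff θ n k) t using 1
  rcases le_or_gt k n with hkn | hnk
  · rw [← add_sum_Ioc_eq_sum_Icc hkn, ← add_sum_Ioc_eq_sum_Icc hkn, Icc_add_one_left_eq_Ioc,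
      mul_add, mul_sum, mul_sum, add_assoc, ← sum_add_distrib]
    congr 1
    refine sum_congr rfl fun j hj => ?_
    rw [mul_left_comm (-deathRate θ j), deathRate_mul_qCoeff (mem_Ioc.mp hj).1]
    simp only [deathRate]
    ring
  · simp [Icc_eq_empty_of_lt hnk, Icc_eq_empty_of_lt (hnk.trans (Nat.lt_succ_self k))]

/-- The Kolmogorov forward equation of the pure death process `A_n^θ`:
`d/dt q^θ_{n,k}(t) = -(k(k+θ-1)/2) q^θ_{n,k}(t) + ((k+1)(k+θ)/2) q^θ_{n,k+1}(t)`. -/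
theorem stmt_12 (θ : ℝ) (hθ : 0 ≤ θ) (n k : ℕ) (hk : 1 ≤ k) (hkn : k ≤ n)
    (t : ℝ) (ht : 0 < t) :
    HasDerivAt (fun s => q θ n k s)
      (-((k : ℝ) * ((k : ℝ) + θ - 1) / 2) * q θ n k t
        + ((k : ℝ) + 1) * ((k : ℝ) + θ) / 2 * q θ n (k + 1) t) t :=
  stmt_12_general θ n k t
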